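/- Let q ≥ 8 be an even prime power and p(x) = 1 + x + x^2. Then in Γ_q the union of neighborhoods ∪_{x∈F_q} N((x,x,p(x))_1) ∪ N((q,1,1)_1) equals ∪_{x∈F_q} N((x,1+x,p(x))_1) ∪ N((q,0,1)_1). -/
import Mathlib


/-- One side of the bipartition of `Γ_q`: ordinary vertices `(a,b,c)` with
`a ∈ F ∪ {q}` (encoded as `Option F`, `none` being the extra symbol `q`) and
`b, c ∈ F`, together with the special vertices `(q,q,a)` with `a ∈ F ∪ {q}`. -/
abbrev SGam (F : Type*) := (Option F × F × F) ⊕ Option F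

/-- The incidence relation of `Γ_q`: `lineAdj l p` says the line `l ∈ V₁` is
incident with the point `p ∈ V₀`, following the explicit formula of Definition 1. -/
def lineAdj {F : Type*} [Field F] : SGam F → SGam F → Prop
  | Sum.inl (some a, b, c), Sum.inl (some x, y, z) =>
      y = a * x + b ∧ z = a ^ 2 * x + 2 * a * b + c
  | Sum.inl (some a, _, c), Sum.inl (none, y, z) => y = a ∧ z = c
  | Sum.inl (none, b, c), Sum.inl (some x, y, _) => x = c ∧ y = b
  | Sum.inl (none, _, c), Sum.inr (some z) => z = c
  | Sum.inr (some a), Sum.inl (none, y, _) => y = a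
  | Sum.inr (some _), Sum.inr none => True
  | Sum.inr none, Sum.inr _ => True
  | _, _ => False

/-- The bipartite graph `Γ_q`: `Sum.inl` is the point side `V₀`, `Sum.inr` is the
line side `V₁`, and a point is adjacent to a line iff they are incident. -/
def GammaQ (F : Type*) [Field F] : SimpleGraph (SGam F ⊕ SGam F) :=
  SimpleGraph.fromRel (fun u v =>
    match u, v with
    | Sum.inl p, Sum.inr l => lineAdj l p
    | _, _ => False)

/-- The point `(a,b,c)₀`, `a ∈ F ∪ {q}`. -/
def pt {F : Type*} (a : Option F) (b c : F) : SGam F ⊕ SGam F := Sum.inl (Sum.inl (a, b, c))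
/-- The point `(q,q,a)₀`, `a ∈ F ∪ {q}`. -/
def ptq {F : Type*} (a : Option F) : SGam F ⊕ SGam F := Sum.inl (Sum.inr a)
/-- The line `(a,b,c)₁`, `a ∈ F ∪ {q}`. -/
def ln {F : Type*} (a : Option F) (b c : F) : SGam F ⊕ SGam F := Sum.inr (Sum.inl (a, b, c))
/-- The line `(q,q,a)₁`, `a ∈ F ∪ {q}`. -/
def lnq {F : Type*} (a : Option F) : SGam F ⊕ SGam F := Sum.inr (Sum.inr a)
/-- For `q ≥ 8` even and `p(x) = 1 + x + x²`, in `Γ_q`: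
`⋃_{x ∈ F} N((x,x,p(x))₁) ∪ N((q,1,1)₁) = ⋃_{x ∈ F} N((x,1+x,p(x))₁) ∪ N((q,0,1)₁)`. -/
theorem stmt18 {F : Type*} [Field F] [Fintype F]
    (heven : Even (Fintype.card F)) (hq : 8 ≤ Fintype.card F) :
    (⋃ x : F, (GammaQ F).neighborSet (ln (some x) x (1 + x + x ^ 2))) ∪
        (GammaQ F).neighborSet (ln none 1 1) =
      (⋃ x : F, (GammaQ F).neighborSet (ln (some x) (1 + x) (1 + x + x ^ 2))) ∪
        (GammaQ F).neighborSet (ln none 0 1) := by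
  obtain ⟨n, hp, hcard⟩ := FiniteField.card F (ringChar F)
  have hdvd : (2:ℕ) ∣ ringChar F ^ (n:ℕ) := by rw [← hcard]; exact heven.two_dvd
  have hr2 : ringChar F = 2 :=
    ((Nat.prime_dvd_prime_iff_eq Nat.prime_two hp).mp (Nat.prime_two.dvd_of_dvd_pow hdvd)).symm
  have : CharP F 2 := hr2 ▸ ringChar.charP F
  have h2 : (2:F) = 0 := by exact_mod_cast CharP.cast_eq_zero F 2
  ext v
  simp only [Set.mem_union, Set.mem_iUnion, SimpleGraph.mem_neighborSet]
  rcases v with (⟨_ | t, y, z⟩ | a) | l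
  · -- point (none, y, z)
    simp [GammaQ, SimpleGraph.fromRel_adj, ln, lineAdj]
  · -- point (some t, y, z)
    simp only [GammaQ, SimpleGraph.fromRel_adj, ln, lineAdj, ne_eq, reduceCtorEq,
      not_false_iff, true_and, or_false, false_or]
    constructor
    · rintro (⟨x, hy, hz⟩ | ⟨ht, hy⟩)
      · by_cases ht : t = 1
        · subst ht
          exact Or.inr ⟨rfl, by linear_combination hy + x * h2⟩
        · have hne : t + 1 ≠ 0 := fun h => ht (by linear_combination h - h2)
          have hd : (t + 1)⁻¹ * (t + 1) = 1 := inv_mul_cancel₀ hne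
          set d := (t + 1)⁻¹ with hdd
          refine Or.inl ⟨x + d, by linear_combination hy - hd - h2, by
            linear_combination hz - (d + 2*x) * hd - (2*x + 2*d + 2*x*d + d^2) * h2⟩
      · subst ht
        refine Or.inl ⟨1 + z, by linear_combination hy - (z + 1) * h2, by
          linear_combination (-((1+z)^2 + (1+z)*(2+z) + 1)) * h2⟩
    · rintro (⟨x, hy, hz⟩ | ⟨ht, hy⟩)
      · by_cases ht : t = 1
        · subst ht
          exact Or.inr ⟨rfl, by linear_combination hy + x * h2⟩
        · have hne : t + 1 ≠ 0 := fun h => ht (by linear_combination h - h2)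
          have hd : (t + 1)⁻¹ * (t + 1) = 1 := inv_mul_cancel₀ hne
          set d := (t + 1)⁻¹ with hdd
          refine Or.inl ⟨x + d, by linear_combination hy - hd, by
            linear_combination hz - (d + 2*x) * hd - (2*x + 2*d + 2*x*d + d^2 - 2*x - d) * h2⟩
      · subst ht
        refine Or.inl ⟨1 + z, by linear_combination hy - (1 + z) * h2, by
          linear_combination (-(2*(1+z)^2 + 1)) * h2⟩
  · -- special points (q,q,a)
    rcases a with _ | a <;>
      simp [GammaQ, SimpleGraph.fromRel_adj, ln, lineAdj]
  · -- lines
    simp [GammaQ, SimpleGraph.fromRel_adj, ln, lineAdj]
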